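/- If 𝒯 = (𝒳, π, 𝒮) and 𝒯' = (𝒳', π', 𝒮') are disjoint hypergraph transformations (i.e., every hypergraph in 𝒮 ∪ π(𝒮) is vertex disjoint from every hypergraph in 𝒮' ∪ π'(𝒮')), then for every hypergraph X in the intersection of the domains of π' ∘ π and π ∘ π', we have π'(π(X)) = π(π'(X)). -/

import Mathlib

open Classical

universe u

/-- A (finite) hypergraph over a vertex universe `V`: a finite vertex set together with a
finite set of nonempty hyperedges, each a subset of the vertex set. -/
structure FinHypergraph (V : Type u) where
  verts : Set V
  edges : Set (Set V)
  verts_finite : verts.Finite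
  edges_finite : edges.Finite
  edge_sub : ∀ e ∈ edges, e ⊆ verts
  edge_nonempty : ∀ e ∈ edges, e.Nonempty

namespace FinHypergraph

variable {V : Type u}

/-- The null hypergraph `𝒩`. -/
def Null : FinHypergraph V :=
  ⟨∅, ∅, Set.finite_empty, Set.finite_empty, by simp, by simp⟩

/-- Direct sum (hypergraph union) of two hypergraphs. -/
def dSum (X Y : FinHypergraph V) : FinHypergraph V where
  verts := X.verts ∪ Y.verts
  edges := X.edges ∪ Y.edges
  verts_finite := X.verts_finite.union Y.verts_finite
  edges_finite := X.edges_finite.union Y.edges_finite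
  edge_sub := by
    rintro e (he | he)
    · exact (X.edge_sub e he).trans Set.subset_union_left
    · exact (Y.edge_sub e he).trans Set.subset_union_right
  edge_nonempty := by
    rintro e (he | he)
    · exact X.edge_nonempty e he
    · exact Y.edge_nonempty e he

/-- Direct sum of a set of (pairwise disjoint) hypergraphs; the null hypergraph when the
unions fail to be finite.  The direct sum of the empty set is the null hypergraph. -/
noncomputable def bigSum (A : Set (FinHypergraph V)) : FinHypergraph V :=
  if h : (⋃ X ∈ A, X.verts).Finite ∧ (⋃ X ∈ A, X.edges).Finite then
    { verts := ⋃ X ∈ A, X.verts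
      edges := ⋃ X ∈ A, X.edges
      verts_finite := h.1
      edges_finite := h.2
      edge_sub := by
        intro e he
        simp only [Set.mem_iUnion] at he
        obtain ⟨X, hX, heX⟩ := he
        intro v hv
        simp only [Set.mem_iUnion]
        exact ⟨X, hX, X.edge_sub e heX hv⟩
      edge_nonempty := by
        intro e he
        simp only [Set.mem_iUnion] at he
        obtain ⟨X, hX, heX⟩ := he
        exact X.edge_nonempty e heX }
  else Null

/-- The direct difference `X ⊖ Z`: the unique hypergraph `W` vertex disjoint from `Z`
with `X = W ⊕ Z`, when it exists. -/
noncomputable def dDiff (X Z : FinHypergraph V) : FinHypergraph V :=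
  if h : ∃ W : FinHypergraph V, Disjoint W.verts Z.verts ∧ X = dSum W Z then h.choose else X

/-- Two vertices are connected in `X` if there is a walk between them. -/
def Connected (X : FinHypergraph V) (a b : V) : Prop :=
  a ∈ X.verts ∧ Relation.ReflTransGen (fun u w => ∃ e ∈ X.edges, u ∈ e ∧ w ∈ e) a b

/-- `C` is a connected component of `X`: its vertex set is a connectivity class of `X`
and its edges are the edges of `X` lying inside it. -/
def IsComponent (X C : FinHypergraph V) : Prop :=
  (∃ v ∈ X.verts, C.verts = {w | Connected X v w}) ∧
  C.edges = {e ∈ X.edges | e ⊆ C.verts}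

/-- The set `𝒞(X)` of connected components of `X`. -/
def comps (X : FinHypergraph V) : Set (FinHypergraph V) := {C | IsComponent X C}

/-- Component disjointness: `𝒞(X) ∩ 𝒞(Y) = ∅`. -/
def CompDisjoint (X Y : FinHypergraph V) : Prop := comps X ∩ comps Y = ∅

/-- `X ∧ H`: the union (direct sum) of the components of `X` meeting some hyperedge in `H`. -/
noncomputable def wedge (X : FinHypergraph V) (H : Set (Set V)) : FinHypergraph V :=
  bigSum {C ∈ comps X | ∃ f ∈ H, (f ∩ C.verts).Nonempty}

/-- `𝒮` is component maximal in `𝒳` with `𝒮`-maximal subsets given by `D`. -/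
def IsMaximalSubsets (dom S : Set (FinHypergraph V))
    (D : FinHypergraph V → Set (FinHypergraph V)) : Prop :=
  ∀ X ∈ dom,
    D X ⊆ S ∧
    (D X).Pairwise CompDisjoint ∧
    (Null ∈ S → Null ∈ D X) ∧
    (∀ T ∈ D X, comps T ⊆ comps X) ∧
    (∀ s ∈ S, comps s ⊆ comps X → ∃ T ∈ D X, comps s ⊆ comps T)

/-- `𝒮_X := { S ∈ 𝒟_X | V(π(S)) ∩ V(X ⊖ S) = ∅ }`. -/
noncomputable def SXof (π : FinHypergraph V → FinHypergraph V)
    (D : FinHypergraph V → Set (FinHypergraph V)) (X : FinHypergraph V) : Set (FinHypergraph V) :=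
  {s ∈ D X | Disjoint (π s).verts (dDiff X s).verts}

/-- `(𝒳, π, 𝒮)` (with `𝒮`-maximal subsets `D`) is a hypergraph transformation:
nonredundancy, component maximality, and preservation of the direct sum decomposition. -/
def IsHGT (dom : Set (FinHypergraph V)) (π : FinHypergraph V → FinHypergraph V)
    (S : Set (FinHypergraph V)) (D : FinHypergraph V → Set (FinHypergraph V)) : Prop :=
  (∀ s ∈ S, comps s ∩ comps (π s) = ∅) ∧
  (Null ∈ S → π Null ≠ Null) ∧
  IsMaximalSubsets dom S D ∧
  ∀ X ∈ dom,
    (π '' SXof π D X).Pairwise (fun A B => Disjoint A.verts B.verts) ∧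
    Set.InjOn π (SXof π D X) ∧
    π X = dSum (dDiff X (bigSum (SXof π D X))) (bigSum (π '' SXof π D X))

/-- `𝒮'` is upward closed with respect to `𝒮`. -/
def UpwardClosed (S' S : Set (FinHypergraph V)) : Prop :=
  ∀ s ∈ S', ∀ t ∈ S, comps s ⊆ comps t → t ∈ S'

end FinHypergraph

/-!
Disjointness of the transformations means that `π` neither creates nor destroys a component that
could lie in a member of `𝒮'`. Hence `𝒟'_{π X} = 𝒟'_X` and `𝒮'_{π X} = 𝒮'_X`, and symmetrically
`𝒮_{π' X} = 𝒮_X`. So both composites remove the sums `B = ⊕ 𝒮_X` and `B' = ⊕ 𝒮'_X` of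
components of `X` and add `⊕ π(𝒮_X)` and `⊕ π'(𝒮'_X)`; since what one of them adds is vertex
disjoint from what the other removes, the order does not matter.
-/

namespace Set

variable {α : Type*}

lemma sdiff_union_sdiff_union_comm {X B U B' U' : Set α}
    (hUB' : Disjoint U B') (hU'B : Disjoint U' B) :
    (X \ B ∪ U) \ B' ∪ U' = (X \ B' ∪ U') \ B ∪ U := by
  ext x
  have h₁ := fun h : x ∈ U => disjoint_left.1 hUB' h
  have h₂ := fun h : x ∈ U' => disjoint_left.1 hU'B h
  simp only [mem_union, mem_sdiff]
  tauto

lemma disjoint_sdiff_union_sdiff_iff {P X B U s : Set α}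
    (hB : Disjoint P B) (hU : Disjoint P U) :
    Disjoint P ((X \ B ∪ U) \ s) ↔ Disjoint P (X \ s) := by
  simp only [disjoint_left, mem_union, mem_sdiff] at hB hU ⊢
  grind

end Set

namespace FinHypergraph

variable {V : Type u}

theorem ext {X Y : FinHypergraph V} (hv : X.verts = Y.verts) (he : X.edges = Y.edges) :
    X = Y := by
  cases X; cases Y; simp_all

@[simp] lemma dSum_verts (X Y : FinHypergraph V) : (dSum X Y).verts = X.verts ∪ Y.verts := rfl

@[simp] lemma dSum_edges (X Y : FinHypergraph V) : (dSum X Y).edges = X.edges ∪ Y.edges := rfl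

lemma disjoint_edges_of_disjoint_verts {X Y : FinHypergraph V}
    (h : Disjoint X.verts Y.verts) : Disjoint X.edges Y.edges :=
  Set.disjoint_left.2 fun e heX heY =>
    let ⟨_, hx⟩ := X.edge_nonempty e heX
    Set.disjoint_left.1 h (X.edge_sub e heX hx) (Y.edge_sub e heY hx)

namespace Connected

variable {X : FinHypergraph V} {u v w : V}

lemma mem_right (h : Connected X v w) : w ∈ X.verts := by
  obtain ⟨hv, h⟩ := h
  induction h with
  | refl => exact hv
  | tail _ step => obtain ⟨e, he, -, hwe⟩ := step; exact X.edge_sub e he hwe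

protected lemma refl (hv : v ∈ X.verts) : Connected X v v := ⟨hv, .refl⟩

protected lemma symm (h : Connected X v w) : Connected X w v :=
  ⟨h.mem_right, Relation.ReflTransGen.mono (fun _ _ ⟨e, he, ha, hb⟩ => ⟨e, he, hb, ha⟩) _ _
    (Relation.reflTransGen_swap.2 h.2)⟩

protected lemma trans (h₁ : Connected X u v) (h₂ : Connected X v w) : Connected X u w :=
  ⟨h₁.1, h₁.2.trans h₂.2⟩

end Connected

def compOf (X : FinHypergraph V) (v : V) : FinHypergraph V where
  verts := {w | Connected X v w}
  edges := {e ∈ X.edges | e ⊆ {w | Connected X v w}}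
  verts_finite := X.verts_finite.subset fun _ hw => Connected.mem_right hw
  edges_finite := X.edges_finite.subset fun _ he => he.1
  edge_sub := fun _ he => he.2
  edge_nonempty := fun e he => X.edge_nonempty e he.1

section Components

variable {X C K : FinHypergraph V} {v w : V}

lemma mem_compOf_self (hv : v ∈ X.verts) : v ∈ (compOf X v).verts := Connected.refl hv

lemma mem_compOf_edges {e : Set V} (he : e ∈ X.edges) (hv : v ∈ e) : e ∈ (compOf X v).edges :=
  ⟨he, fun _ hw => ⟨X.edge_sub e he hv, .single ⟨e, he, hv, hw⟩⟩⟩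

lemma compOf_mem_comps (hv : v ∈ X.verts) : compOf X v ∈ comps X := ⟨⟨v, hv, rfl⟩, rfl⟩

lemma exists_eq_compOf (hC : C ∈ comps X) : ∃ v ∈ X.verts, C = compOf X v := by
  obtain ⟨⟨v, hv, hverts⟩, hedges⟩ := hC
  exact ⟨v, hv, ext hverts (by rw [hedges, hverts]; rfl)⟩

lemma compOf_eq_of_connected (h : Connected X v w) : compOf X v = compOf X w := by
  have hvw : {u | Connected X v u} = {u | Connected X w u} :=
    Set.ext fun _ => ⟨h.symm.trans, h.trans⟩
  exact ext hvw (by simp only [compOf, hvw])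

lemma eq_of_mem_comps_of_inter_nonempty (hC : C ∈ comps X) (hK : K ∈ comps X)
    (h : (C.verts ∩ K.verts).Nonempty) : C = K := by
  obtain ⟨v, -, rfl⟩ := exists_eq_compOf hC
  obtain ⟨w, -, rfl⟩ := exists_eq_compOf hK
  obtain ⟨u, hvu, hwu⟩ := h
  exact (compOf_eq_of_connected hvu).trans (compOf_eq_of_connected hwu).symm

lemma verts_subset_of_mem_comps (hC : C ∈ comps X) : C.verts ⊆ X.verts := by
  obtain ⟨v, -, rfl⟩ := exists_eq_compOf hC
  exact fun _ hw => Connected.mem_right hw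

lemma edges_subset_of_mem_comps (hC : C ∈ comps X) : C.edges ⊆ X.edges := by
  obtain ⟨v, -, rfl⟩ := exists_eq_compOf hC
  exact fun _ he => he.1

lemma verts_nonempty_of_mem_comps (hC : C ∈ comps X) : C.verts.Nonempty := by
  obtain ⟨v, hv, rfl⟩ := exists_eq_compOf hC
  exact ⟨v, mem_compOf_self hv⟩

lemma verts_eq_biUnion_comps (X : FinHypergraph V) : X.verts = ⋃ C ∈ comps X, C.verts :=
  Set.Subset.antisymm
    (fun _ hv => Set.mem_biUnion (compOf_mem_comps hv) (mem_compOf_self hv))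
    (Set.iUnion₂_subset fun _ => verts_subset_of_mem_comps)

lemma edges_eq_biUnion_comps (X : FinHypergraph V) : X.edges = ⋃ C ∈ comps X, C.edges := by
  refine Set.Subset.antisymm (fun e he => ?_)
    (Set.iUnion₂_subset fun _ => edges_subset_of_mem_comps)
  obtain ⟨v, hv⟩ := X.edge_nonempty e he
  exact Set.mem_biUnion (compOf_mem_comps (X.edge_sub e he hv)) (mem_compOf_edges he hv)

lemma eq_of_comps_eq {Y : FinHypergraph V} (h : comps X = comps Y) : X = Y :=
  ext (by rw [verts_eq_biUnion_comps, verts_eq_biUnion_comps, h])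
    (by rw [edges_eq_biUnion_comps, edges_eq_biUnion_comps, h])

lemma eq_null_of_comps_eq_empty (h : comps X = ∅) : X = Null :=
  ext (by rw [verts_eq_biUnion_comps, h]; simp [Null])
    (by rw [edges_eq_biUnion_comps, h]; simp [Null])

lemma comps_finite (X : FinHypergraph V) : (comps X).Finite := by
  refine Set.Finite.of_finite_image (f := verts) (X.verts_finite.finite_subsets.subset ?_)
    fun C hC K hK h => eq_of_mem_comps_of_inter_nonempty hC hK ?_
  · rintro _ ⟨C, hC, rfl⟩
    exact verts_subset_of_mem_comps hC
  · obtain ⟨v, hv⟩ := verts_nonempty_of_mem_comps hC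
    exact ⟨v, hv, (h : C.verts = K.verts) ▸ hv⟩

lemma finite_setOf_comps_subset (X : FinHypergraph V) : {t | comps t ⊆ comps X}.Finite :=
  Set.Finite.of_finite_image (X.comps_finite.finite_subsets.subset fun _ ⟨_, ht, hC⟩ => hC ▸ ht)
    fun _ _ _ _ => eq_of_comps_eq

end Components

section DirectSum

variable {W U K : FinHypergraph V}

lemma connected_dSum_iff (hWU : Disjoint W.verts U.verts) {v w : V} (hv : v ∈ W.verts) :
    Connected (dSum W U) v w ↔ Connected W v w := by
  refine ⟨fun h => ?_, fun ⟨_, h⟩ => ⟨Or.inl hv, Relation.ReflTransGen.mono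
    (fun _ _ ⟨e, he, ha, hb⟩ => ⟨e, Or.inl he, ha, hb⟩) _ _ h⟩⟩
  obtain ⟨-, h⟩ := h
  induction h with
  | refl => exact Connected.refl hv
  | tail _ step ih =>
    obtain ⟨e, heW | heU, hbe, hce⟩ := step
    · exact ih.trans ⟨ih.mem_right, .single ⟨e, heW, hbe, hce⟩⟩
    · exact absurd (U.edge_sub e heU hbe) (Set.disjoint_left.1 hWU ih.mem_right)

lemma compOf_dSum (hWU : Disjoint W.verts U.verts) {v : V} (hv : v ∈ W.verts) :
    compOf (dSum W U) v = compOf W v := by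
  have hvs : {w | Connected (dSum W U) v w} = {w | Connected W v w} :=
    Set.ext fun _ => connected_dSum_iff hWU hv
  refine ext hvs (Set.ext fun e => ⟨fun ⟨he, hsub⟩ => ⟨?_, hvs ▸ hsub⟩,
    fun ⟨he, hsub⟩ => ⟨Or.inl he, hvs ▸ hsub⟩⟩)
  refine he.resolve_right fun heU => ?_
  obtain ⟨x, hx⟩ := U.edge_nonempty e heU
  exact Set.disjoint_left.1 hWU (Connected.mem_right (hvs ▸ hsub hx)) (U.edge_sub e heU hx)

lemma mem_comps_dSum_iff (hWU : Disjoint W.verts U.verts) (hK : Disjoint K.verts U.verts) :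
    K ∈ comps (dSum W U) ↔ K ∈ comps W := by
  constructor
  · intro h
    obtain ⟨v, hvW | hvU, rfl⟩ := exists_eq_compOf h
    · exact compOf_dSum hWU hvW ▸ compOf_mem_comps hvW
    · exact absurd hvU (Set.disjoint_left.1 hK (mem_compOf_self (Or.inr hvU)))
  · intro h
    obtain ⟨v, hv, rfl⟩ := exists_eq_compOf h
    exact compOf_dSum hWU hv ▸ compOf_mem_comps (Or.inl hv)

lemma eq_sdiff_of_eq_dSum {Y s : FinHypergraph V} (hd : Disjoint W.verts s.verts)
    (hY : Y = dSum W s) : W.verts = Y.verts \ s.verts ∧ W.edges = Y.edges \ s.edges := by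
  subst hY
  simp only [dSum_verts, dSum_edges, Set.union_sdiff_right, hd.sdiff_eq_left,
    (disjoint_edges_of_disjoint_verts hd).sdiff_eq_left, and_self]

end DirectSum

/-- For instance a union of components of `Y`. Exactly such `s` split off as `Y = (Y ⊖ s) ⊕ s`. -/
structure IsSaturatedSub (Y s : FinHypergraph V) : Prop where
  verts_subset : s.verts ⊆ Y.verts
  edges_subset : s.edges ⊆ Y.edges
  mem_edges : ∀ e ∈ Y.edges, (e ∩ s.verts).Nonempty → e ∈ s.edges

section Saturated

variable {Y s : FinHypergraph V}

lemma isSaturatedSub_of_comps_subset (h : comps s ⊆ comps Y) : IsSaturatedSub Y s where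
  verts_subset := by
    rw [verts_eq_biUnion_comps s]
    exact Set.iUnion₂_subset fun C hC => verts_subset_of_mem_comps (h hC)
  edges_subset := by
    rw [edges_eq_biUnion_comps s]
    exact Set.iUnion₂_subset fun C hC => edges_subset_of_mem_comps (h hC)
  mem_edges e he := by
    rintro ⟨x, hxe, hxs⟩
    have hK : compOf s x ∈ comps s := compOf_mem_comps hxs
    have hKY : compOf s x = compOf Y x :=
      eq_of_mem_comps_of_inter_nonempty (h hK) (compOf_mem_comps (Y.edge_sub e he hxe))
        ⟨x, mem_compOf_self hxs, mem_compOf_self (Y.edge_sub e he hxe)⟩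
    exact edges_subset_of_mem_comps hK (hKY ▸ mem_compOf_edges he hxe)

lemma exists_dSum_eq (h : IsSaturatedSub Y s) :
    ∃ W : FinHypergraph V, Disjoint W.verts s.verts ∧ Y = dSum W s := by
  let W : FinHypergraph V :=
    { verts := Y.verts \ s.verts
      edges := Y.edges \ s.edges
      verts_finite := Y.verts_finite.sdiff
      edges_finite := Y.edges_finite.sdiff
      edge_sub := fun e ⟨heY, hes⟩ x hx =>
        ⟨Y.edge_sub e heY hx, fun hxs => hes (h.mem_edges e heY ⟨x, hx, hxs⟩)⟩
      edge_nonempty := fun e he => Y.edge_nonempty e he.1 }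
  exact ⟨W, Set.disjoint_sdiff_left, ext (Set.sdiff_union_of_subset h.verts_subset).symm
    (Set.sdiff_union_of_subset h.edges_subset).symm⟩

lemma dSum_dDiff (h : IsSaturatedSub Y s) :
    Disjoint (dDiff Y s).verts s.verts ∧ Y = dSum (dDiff Y s) s := by
  rw [dDiff, dif_pos (exists_dSum_eq h)]
  exact (exists_dSum_eq h).choose_spec

lemma verts_dDiff (h : IsSaturatedSub Y s) : (dDiff Y s).verts = Y.verts \ s.verts :=
  (eq_sdiff_of_eq_dSum (dSum_dDiff h).1 (dSum_dDiff h).2).1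

lemma edges_dDiff (h : IsSaturatedSub Y s) : (dDiff Y s).edges = Y.edges \ s.edges :=
  (eq_sdiff_of_eq_dSum (dSum_dDiff h).1 (dSum_dDiff h).2).2

end Saturated

section BigSum

variable {A : Set (FinHypergraph V)}

lemma verts_bigSum_subset (A : Set (FinHypergraph V)) :
    (bigSum A).verts ⊆ ⋃ X ∈ A, X.verts := by
  unfold bigSum
  split_ifs
  · exact subset_rfl
  · exact Set.empty_subset _

lemma verts_bigSum_image_subset (f : FinHypergraph V → FinHypergraph V)
    (A : Set (FinHypergraph V)) : (bigSum (f '' A)).verts ⊆ ⋃ X ∈ A, (f X).verts :=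
  (verts_bigSum_subset _).trans (by rw [Set.biUnion_image])

lemma bigSum_of_finite (hA : A.Finite) :
    (bigSum A).verts = ⋃ X ∈ A, X.verts ∧ (bigSum A).edges = ⋃ X ∈ A, X.edges := by
  rw [bigSum, dif_pos ⟨hA.biUnion fun X _ => X.verts_finite, hA.biUnion fun X _ => X.edges_finite⟩]
  exact ⟨rfl, rfl⟩

lemma disjoint_verts_bigSum {B : Set (FinHypergraph V)}
    (h : ∀ a ∈ A, ∀ b ∈ B, Disjoint a.verts b.verts) :
    Disjoint (bigSum A).verts (bigSum B).verts := by
  refine Disjoint.mono (verts_bigSum_subset A) (verts_bigSum_subset B) ?_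
  simp only [Set.disjoint_iUnion_left, Set.disjoint_iUnion_right]
  exact fun b hb a ha => h a ha b hb

lemma isSaturatedSub_bigSum {Y : FinHypergraph V} (hA : A.Finite)
    (h : ∀ s ∈ A, IsSaturatedSub Y s) : IsSaturatedSub Y (bigSum A) := by
  obtain ⟨hv, he⟩ := bigSum_of_finite hA
  refine ⟨?_, ?_, fun e heY ⟨x, hxe, hxA⟩ => ?_⟩
  · rw [hv]; exact Set.iUnion₂_subset fun s hs => (h s hs).verts_subset
  · rw [he]; exact Set.iUnion₂_subset fun s hs => (h s hs).edges_subset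
  · rw [hv, Set.mem_iUnion₂] at hxA
    obtain ⟨s, hs, hxs⟩ := hxA
    rw [he]
    exact Set.mem_biUnion hs ((h s hs).mem_edges e heY ⟨x, hxe, hxs⟩)

end BigSum

lemma dSum_dDiff_comm {X Y Y' B B' U U' : FinHypergraph V}
    (hY : Y = dSum (dDiff X B) U) (hY' : Y' = dSum (dDiff X B') U')
    (hB : IsSaturatedSub X B) (hB' : IsSaturatedSub X B')
    (hBY' : IsSaturatedSub Y' B) (hB'Y : IsSaturatedSub Y B')
    (hUB' : Disjoint U.verts B'.verts) (hU'B : Disjoint U'.verts B.verts) :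
    dSum (dDiff Y B') U' = dSum (dDiff Y' B) U := by
  apply ext
  · rw [dSum_verts, dSum_verts, verts_dDiff hB'Y, verts_dDiff hBY', hY, hY', dSum_verts,
      dSum_verts, verts_dDiff hB, verts_dDiff hB']
    exact Set.sdiff_union_sdiff_union_comm hUB' hU'B
  · rw [dSum_edges, dSum_edges, edges_dDiff hB'Y, edges_dDiff hBY', hY, hY', dSum_edges,
      dSum_edges, edges_dDiff hB, edges_dDiff hB']
    exact Set.sdiff_union_sdiff_union_comm (disjoint_edges_of_disjoint_verts hUB')
      (disjoint_edges_of_disjoint_verts hU'B)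

namespace IsMaximalSubsets

variable {dom S : Set (FinHypergraph V)} {D : FinHypergraph V → Set (FinHypergraph V)}
  {X Y : FinHypergraph V}

lemma finite (hM : IsMaximalSubsets dom S D) (hX : X ∈ dom) : (D X).Finite :=
  (finite_setOf_comps_subset X).subset (hM X hX).2.2.2.1

/-- Members of `𝒟_X` are pairwise component disjoint, so a non-null one lies in no other. -/
lemma eq_of_comps_subset (hM : IsMaximalSubsets dom S D) (hX : X ∈ dom) {u T : FinHypergraph V}
    (hu : u ∈ D X) (hu₀ : u ≠ Null) (hT : T ∈ D X) (h : comps u ⊆ comps T) : u = T := by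
  by_contra hne
  have hdisj : comps u ∩ comps T = ∅ := (hM X hX).2.1 hu hT hne
  exact hu₀ (eq_null_of_comps_eq_empty (by rwa [Set.inter_eq_left.2 h] at hdisj))

lemma subset_of_comps_subset_imp (hM : IsMaximalSubsets dom S D) (hX : X ∈ dom) (hY : Y ∈ dom)
    (hXY : ∀ t ∈ S, comps t ⊆ comps X → comps t ⊆ comps Y)
    (hYX : ∀ t ∈ S, comps t ⊆ comps Y → comps t ⊆ comps X) : D X ⊆ D Y := by
  obtain ⟨hDXS, -, -, hDX, hmaxX⟩ := hM X hX
  obtain ⟨hDYS, -, hnull, hDY, hmaxY⟩ := hM Y hY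
  intro u hu
  by_cases hu₀ : u = Null
  · exact hu₀ ▸ hnull (hu₀ ▸ hDXS hu)
  obtain ⟨T, hT, huT⟩ := hmaxY u (hDXS hu) (hXY u (hDXS hu) (hDX u hu))
  obtain ⟨T', hT', hTT'⟩ := hmaxX T (hDYS hT) (hYX T (hDYS hT) (hDY T hT))
  obtain rfl := hM.eq_of_comps_subset hX hu hu₀ hT' (huT.trans hTT')
  rwa [eq_of_comps_eq (huT.antisymm hTT')]

lemma eq_of_comps_subset_iff (hM : IsMaximalSubsets dom S D) (hX : X ∈ dom) (hY : Y ∈ dom)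
    (h : ∀ t ∈ S, comps t ⊆ comps X ↔ comps t ⊆ comps Y) : D X = D Y :=
  (hM.subset_of_comps_subset_imp hX hY (fun t ht => (h t ht).1) fun t ht => (h t ht).2).antisymm
    (hM.subset_of_comps_subset_imp hY hX (fun t ht => (h t ht).2) fun t ht => (h t ht).1)

end IsMaximalSubsets

namespace IsHGT

variable {dom S : Set (FinHypergraph V)} {π : FinHypergraph V → FinHypergraph V}
  {D : FinHypergraph V → Set (FinHypergraph V)} {X : FinHypergraph V}

lemma isMaximalSubsets (hT : IsHGT dom π S D) : IsMaximalSubsets dom S D := hT.2.2.1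

lemma apply_eq (hT : IsHGT dom π S D) (hX : X ∈ dom) :
    π X = dSum (dDiff X (bigSum (SXof π D X))) (bigSum (π '' SXof π D X)) :=
  (hT.2.2.2 X hX).2.2

lemma SXof_subset (hT : IsHGT dom π S D) (hX : X ∈ dom) : SXof π D X ⊆ S :=
  fun _ hs => (hT.isMaximalSubsets X hX).1 hs.1

lemma finite_SXof (hT : IsHGT dom π S D) (hX : X ∈ dom) : (SXof π D X).Finite :=
  (hT.isMaximalSubsets.finite hX).subset fun _ hs => hs.1

lemma isSaturatedSub_bigSum_SXof (hT : IsHGT dom π S D) (hX : X ∈ dom) {Y : FinHypergraph V}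
    (hY : ∀ s ∈ S, comps s ⊆ comps X → comps s ⊆ comps Y) :
    IsSaturatedSub Y (bigSum (SXof π D X)) :=
  isSaturatedSub_bigSum (hT.finite_SXof hX) fun s hs => isSaturatedSub_of_comps_subset
    (hY s (hT.SXof_subset hX hs) ((hT.isMaximalSubsets X hX).2.2.2.1 s hs.1))

lemma verts_apply (hT : IsHGT dom π S D) (hX : X ∈ dom) :
    (π X).verts = X.verts \ (bigSum (SXof π D X)).verts ∪ (bigSum (π '' SXof π D X)).verts := by
  rw [hT.apply_eq hX, dSum_verts, verts_dDiff (hT.isSaturatedSub_bigSum_SXof hX fun _ _ => id)]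

/-- This is where the defining condition `V(π S) ∩ V(X ⊖ S) = ∅` of `𝒮_X` enters. -/
lemma disjoint_dDiff_bigSum_image (hT : IsHGT dom π S D) (hX : X ∈ dom) :
    Disjoint (dDiff X (bigSum (SXof π D X))).verts (bigSum (π '' SXof π D X)).verts := by
  have hsat : ∀ s ∈ SXof π D X, IsSaturatedSub X s := fun s hs =>
    isSaturatedSub_of_comps_subset ((hT.isMaximalSubsets X hX).2.2.2.1 s hs.1)
  rw [verts_dDiff (isSaturatedSub_bigSum (hT.finite_SXof hX) hsat)]
  refine Disjoint.mono_right (verts_bigSum_image_subset π _) ?_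
  rw [Set.disjoint_iUnion₂_right]
  intro s hs
  have hsB : s.verts ⊆ (bigSum (SXof π D X)).verts := by
    rw [(bigSum_of_finite (hT.finite_SXof hX)).1]
    exact Set.subset_biUnion_of_mem hs
  exact (verts_dDiff (hsat s hs) ▸ hs.2.symm).mono_left (Set.sdiff_subset_sdiff_right hsB)

lemma mem_comps_apply_iff (hT : IsHGT dom π S D) (hX : X ∈ dom) {K : FinHypergraph V}
    (hK : ∀ s ∈ S, Disjoint K.verts s.verts ∧ Disjoint K.verts (π s).verts) :
    K ∈ comps (π X) ↔ K ∈ comps X := by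
  have hB := hT.isSaturatedSub_bigSum_SXof hX fun _ _ => id
  have hKB : Disjoint K.verts (bigSum (SXof π D X)).verts := by
    refine Disjoint.mono_right (verts_bigSum_subset _) ?_
    exact Set.disjoint_iUnion₂_right.2 fun s hs => (hK s (hT.SXof_subset hX hs)).1
  have hKU : Disjoint K.verts (bigSum (π '' SXof π D X)).verts := by
    refine Disjoint.mono_right (verts_bigSum_image_subset π _) ?_
    exact Set.disjoint_iUnion₂_right.2 fun s hs => (hK s (hT.SXof_subset hX hs)).2
  conv_rhs => rw [(dSum_dDiff hB).2]
  rw [hT.apply_eq hX, mem_comps_dSum_iff (hT.disjoint_dDiff_bigSum_image hX) hKU,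
    mem_comps_dSum_iff (dSum_dDiff hB).1 hKB]

end IsHGT

def HGTDisjoint (S : Set (FinHypergraph V)) (π : FinHypergraph V → FinHypergraph V)
    (S' : Set (FinHypergraph V)) (π' : FinHypergraph V → FinHypergraph V) : Prop :=
  ∀ A ∈ S ∪ π '' S, ∀ B ∈ S' ∪ π' '' S', Disjoint A.verts B.verts

namespace HGTDisjoint

variable {dom dom' S S' : Set (FinHypergraph V)} {π π' : FinHypergraph V → FinHypergraph V}
  {D D' : FinHypergraph V → Set (FinHypergraph V)} {X : FinHypergraph V}

lemma symm (h : HGTDisjoint S π S' π') : HGTDisjoint S' π' S π :=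
  fun A hA B hB => (h B hB A hA).symm

lemma disjoint_bigSum_image (h : HGTDisjoint S π S' π') {A A' : Set (FinHypergraph V)}
    (hA : A ⊆ S) (hA' : A' ⊆ S') : Disjoint (bigSum (π '' A)).verts (bigSum A').verts :=
  disjoint_verts_bigSum fun _ ⟨s, hs, hsa⟩ s' hs' =>
    h _ (Or.inr ⟨s, hA hs, hsa⟩) s' (Or.inl (hA' hs'))

lemma comps_subset_apply_iff (h : HGTDisjoint S π S' π') (hT : IsHGT dom π S D)
    (hX : X ∈ dom) {t : FinHypergraph V} (ht : t ∈ S') :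
    comps t ⊆ comps (π X) ↔ comps t ⊆ comps X := by
  have hiff : ∀ K ∈ comps t, K ∈ comps (π X) ↔ K ∈ comps X := fun K hK =>
    hT.mem_comps_apply_iff hX fun s hs =>
      ⟨(h s (Or.inl hs) t (Or.inl ht)).symm.mono_left (verts_subset_of_mem_comps hK),
        (h (π s) (Or.inr ⟨s, hs, rfl⟩) t (Or.inl ht)).symm.mono_left
          (verts_subset_of_mem_comps hK)⟩
  exact ⟨fun h' K hK => (hiff K hK).1 (h' hK), fun h' K hK => (hiff K hK).2 (h' hK)⟩

lemma SXof_apply (h : HGTDisjoint S π S' π') (hT : IsHGT dom π S D) (hT' : IsHGT dom' π' S' D')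
    (h₁ : X ∈ dom) (h₂ : π X ∈ dom') (h₃ : X ∈ dom') :
    SXof π' D' (π X) = SXof π' D' X := by
  have hD : D' (π X) = D' X := hT'.isMaximalSubsets.eq_of_comps_subset_iff h₂ h₃
    fun t ht => h.comps_subset_apply_iff hT h₁ ht
  ext s
  simp only [SXof, Set.mem_sep_iff, hD]
  refine and_congr_right fun hs => ?_
  have hsS' : s ∈ S' := (hT'.isMaximalSubsets X h₃).1 hs
  have hsX : comps s ⊆ comps X := (hT'.isMaximalSubsets X h₃).2.2.2.1 s hs
  have hsπX := (h.comps_subset_apply_iff hT h₁ hsS').2 hsX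
  rw [verts_dDiff (isSaturatedSub_of_comps_subset hsX),
    verts_dDiff (isSaturatedSub_of_comps_subset hsπX), hT.verts_apply h₁]
  refine Set.disjoint_sdiff_union_sdiff_iff ?_ ?_
  · refine Disjoint.mono_right (verts_bigSum_subset _) (Set.disjoint_iUnion₂_right.2 ?_)
    exact fun u hu => (h u (Or.inl (hT.SXof_subset h₁ hu)) _ (Or.inr ⟨s, hsS', rfl⟩)).symm
  · refine Disjoint.mono_right (verts_bigSum_image_subset π _) (Set.disjoint_iUnion₂_right.2 ?_)
    exact fun u hu =>
      (h (π u) (Or.inr ⟨u, hT.SXof_subset h₁ hu, rfl⟩) _ (Or.inr ⟨s, hsS', rfl⟩)).symm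

end HGTDisjoint

end FinHypergraph

open FinHypergraph

theorem stmt11_general {V : Type u} (dom dom' S S' : Set (FinHypergraph V))
    (π π' : FinHypergraph V → FinHypergraph V)
    (D D' : FinHypergraph V → Set (FinHypergraph V))
    (hT : IsHGT dom π S D) (hT' : IsHGT dom' π' S' D')
    (hdisj : ∀ A ∈ S ∪ π '' S, ∀ B ∈ S' ∪ π' '' S', Disjoint A.verts B.verts)
    (X : FinHypergraph V)
    (h1 : X ∈ dom) (h2 : π X ∈ dom') (h3 : X ∈ dom') (h4 : π' X ∈ dom) :
    π' (π X) = π (π' X) := by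
  have hdisj : HGTDisjoint S π S' π' := hdisj
  set A := SXof π D X
  set A' := SXof π' D' X
  have hB : IsSaturatedSub X (bigSum A) := hT.isSaturatedSub_bigSum_SXof h1 fun _ _ => id
  have hB' : IsSaturatedSub X (bigSum A') := hT'.isSaturatedSub_bigSum_SXof h3 fun _ _ => id
  have hBπ' : IsSaturatedSub (π' X) (bigSum A) := hT.isSaturatedSub_bigSum_SXof h1
    fun _ hs => (hdisj.symm.comps_subset_apply_iff hT' h3 hs).2
  have hB'π : IsSaturatedSub (π X) (bigSum A') := hT'.isSaturatedSub_bigSum_SXof h3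
    fun _ hs => (hdisj.comps_subset_apply_iff hT h1 hs).2
  calc π' (π X) = dSum (dDiff (π X) (bigSum A')) (bigSum (π' '' A')) := by
        rw [hT'.apply_eq h2, hdisj.SXof_apply hT hT' h1 h2 h3]
    _ = dSum (dDiff (π' X) (bigSum A)) (bigSum (π '' A)) :=
        dSum_dDiff_comm (hT.apply_eq h1) (hT'.apply_eq h3) hB hB' hBπ' hB'π
          (hdisj.disjoint_bigSum_image (hT.SXof_subset h1) (hT'.SXof_subset h3))
          (hdisj.symm.disjoint_bigSum_image (hT'.SXof_subset h3) (hT.SXof_subset h1))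
    _ = π (π' X) := by
        rw [hT.apply_eq h4, hdisj.symm.SXof_apply hT' hT h3 h4 h1]

theorem stmt11 {V : Type u} (dom dom' S S' : Set (FinHypergraph V))
    (π π' : FinHypergraph V → FinHypergraph V)
    (D D' : FinHypergraph V → Set (FinHypergraph V))
    (hsub : S ⊆ dom) (hsub' : S' ⊆ dom')
    (hT : IsHGT dom π S D) (hT' : IsHGT dom' π' S' D')
    (hdisj : ∀ A ∈ S ∪ π '' S, ∀ B ∈ S' ∪ π' '' S', Disjoint A.verts B.verts)
    (X : FinHypergraph V)
    (h1 : X ∈ dom) (h2 : π X ∈ dom') (h3 : X ∈ dom') (h4 : π' X ∈ dom) :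
    π' (π X) = π (π' X) :=
  stmt11_general dom dom' S S' π π' D D' hT hT' hdisj X h1 h2 h3 h4
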